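/- Let 1 ≤ q < p < ∞. There is a constant C = C(p,q), independent of the interval I, such that every m ∈ V_q(I) can be written as m = Σ_j λ_j m_j where each m_j is a step function on I (finitely or countably many steps) whose coefficient sequence has ℓ^p norm at most 1, and Σ_j |λ_j| ≤ C ‖m‖_{V_q(I)}. Equivalently, V_q(I) ⊂ R_p(I) with inclusion norm bounded independently of I. -/

import Mathlib

/-!
Put `w(x) = Var_q(m; [a, x])^q`. Superadditivity of the `q`-variation gives
`|m(y) - m(x)|^q ≤ w(y) - w(x)` for `x ≤ y`, so on every set where `w / w(b)` stays in one dyadic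
interval of length `2^{-k}` the function `m` oscillates by at most `Var_q(m) 2^{-k/q}`. Sampling `m`
once on each of these level sets gives step functions `s_k → m` uniformly, and
`m = s_0 + Σ_k (s_{k+1} - s_k)`. The increment `s_{k+1} - s_k` has at most `2^{k+2}` steps of
size `O(Var_q(m) 2^{-k/q})`, so its `R_p`-norm is `O(Var_q(m) 2^{k/p - k/q})`, summable as `q < p`.
-/

open Finset

noncomputable def varSum (q : ℝ) (m : ℝ → ℂ) (n : ℕ) (t : ℕ → ℝ) : ℝ :=
  (∑ i ∈ Finset.range n, ‖m (t (i + 1)) - m (t i)‖ ^ q) ^ (1 / q)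

def varSet (q a b : ℝ) (m : ℝ → ℂ) : Set ℝ :=
  {v | ∃ (n : ℕ) (t : ℕ → ℝ), t 0 = a ∧ t n = b ∧ (∀ i < n, t i < t (i + 1)) ∧
    v = varSum q m n t}

noncomputable def qVar (q a b : ℝ) (m : ℝ → ℂ) : ℝ := sSup (varSet q a b m)

/-- `f` belongs to the class `𝓡_p([a,b])`: it is a step function on `[a,b]`, constant on the
members of an (at most countable) partition of `[a,b]` into subintervals, whose coefficient
sequence has `ℓ^p` norm at most `1`. -/
def InRclass (p a b : ℝ) (f : ℝ → ℂ) : Prop :=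
  ∃ (J : ℕ → Set ℝ) (c : ℕ → ℂ),
    (∀ n, J n ⊆ Set.Icc a b) ∧
    (∀ n, (J n).OrdConnected) ∧
    Pairwise (Function.onFun Disjoint J) ∧
    (∀ x ∈ Set.Icc a b, ∃ n, x ∈ J n) ∧
    (∀ n, ∀ x ∈ J n, f x = c n) ∧
    (∀ n, J n = ∅ → c n = 0) ∧
    Summable (fun n => ‖c n‖ ^ p) ∧
    (∑' n, ‖c n‖ ^ p) ≤ 1

open Set

section Variation

variable {q a b x y v : ℝ} {m : ℝ → ℂ}

lemma mem_varSet_nonneg (hv : v ∈ varSet q a x m) : 0 ≤ v := by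
  obtain ⟨n, t, -, -, -, rfl⟩ := hv
  exact Real.rpow_nonneg (sum_nonneg fun i _ => Real.rpow_nonneg (norm_nonneg _) q) _

lemma qVar_nonneg : 0 ≤ qVar q a x m :=
  Real.sSup_nonneg fun _ => mem_varSet_nonneg

lemma varSet_nonempty (hax : a ≤ x) : (varSet q a x m).Nonempty := by
  rcases hax.eq_or_lt with rfl | hax
  · exact ⟨_, 0, fun _ => a, rfl, rfl, fun i hi => absurd hi (Nat.not_lt_zero i), rfl⟩
  · refine ⟨_, 1, fun i => if i = 0 then a else x, rfl, rfl, fun i hi => ?_, rfl⟩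
    obtain rfl : i = 0 := by omega
    simpa using hax

lemma rpow_add_mem_varSet (hq : q ≠ 0) (hxy : x < y) (hv : v ∈ varSet q a x m) :
    (v ^ q + ‖m y - m x‖ ^ q) ^ (1 / q) ∈ varSet q a y m := by
  obtain ⟨n, t, h0, hn, hmono, rfl⟩ := hv
  refine ⟨n + 1, fun i => if i ≤ n then t i else y, by simp [h0], by simp, fun i hi => ?_, ?_⟩
  · rcases (Nat.lt_succ_iff.1 hi).lt_or_eq with hi | rfl
    · simpa [hi.le, Nat.succ_le_of_lt hi] using hmono i hi
    · simpa [hn] using hxy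
  · have hS : 0 ≤ ∑ i ∈ range n, ‖m (t (i + 1)) - m (t i)‖ ^ q :=
      sum_nonneg fun i _ => Real.rpow_nonneg (norm_nonneg _) q
    simp only [varSum, one_div, Real.rpow_inv_rpow hS hq, sum_range_succ, le_refl, if_true,
      show ¬ n + 1 ≤ n by omega, if_false, hn]
    congr 2
    exact sum_congr rfl fun i hi => by
      simp [(mem_range.1 hi).le, Nat.succ_le_of_lt (mem_range.1 hi)]

lemma le_rpow_add_rpow_rpow_inv (hq : 0 < q) {c : ℝ} (hv : 0 ≤ v) (hc : 0 ≤ c) :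
    v ≤ (v ^ q + c) ^ (1 / q) := by
  rw [one_div, Real.le_rpow_inv_iff_of_pos hv (by positivity) hq]
  exact le_add_of_nonneg_right hc

lemma bddAbove_varSet_of_le (hq : 0 < q) (hyb : y ≤ b) (hB : BddAbove (varSet q a b m)) :
    BddAbove (varSet q a y m) := by
  rcases hyb.eq_or_lt with rfl | hyb
  · exact hB
  obtain ⟨B, hB⟩ := hB
  exact ⟨B, fun v hv => (le_rpow_add_rpow_rpow_inv hq (mem_varSet_nonneg hv)
    (Real.rpow_nonneg (norm_nonneg _) q)).trans (hB (rpow_add_mem_varSet hq.ne' hyb hv))⟩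

lemma norm_sub_rpow_add_qVar_rpow_le (hq : 0 < q) (hax : a ≤ x) (hxy : x ≤ y)
    (hB : BddAbove (varSet q a y m)) :
    ‖m y - m x‖ ^ q + qVar q a x m ^ q ≤ qVar q a y m ^ q := by
  rcases hxy.eq_or_lt with rfl | hxy
  · simp [Real.zero_rpow hq.ne']
  set W := qVar q a y m ^ q
  set c := ‖m y - m x‖ ^ q
  have hc : 0 ≤ c := Real.rpow_nonneg (norm_nonneg _) q
  have hext : ∀ v ∈ varSet q a x m, v ^ q ≤ W - c := fun v hv => by
    have h : _ ≤ qVar q a y m := le_csSup hB (rpow_add_mem_varSet hq.ne' hxy hv)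
    rw [one_div, Real.rpow_inv_le_iff_of_pos
      (add_nonneg (Real.rpow_nonneg (mem_varSet_nonneg hv) q) hc) qVar_nonneg hq] at h
    linarith
  obtain ⟨v₀, hv₀⟩ := varSet_nonempty (q := q) (m := m) hax
  have hWc : 0 ≤ W - c := (Real.rpow_nonneg (mem_varSet_nonneg hv₀) q).trans (hext v₀ hv₀)
  have hsup : qVar q a x m ≤ (W - c) ^ q⁻¹ := csSup_le ⟨v₀, hv₀⟩ fun v hv =>
    (Real.le_rpow_inv_iff_of_pos (mem_varSet_nonneg hv) hWc hq).2 (hext v hv)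
  have := (Real.le_rpow_inv_iff_of_pos qVar_nonneg hWc hq).1 hsup
  linarith

lemma norm_sub_rpow_le_qVar_rpow_sub (hq : 0 < q) (hB : BddAbove (varSet q a b m))
    (hx : x ∈ Icc a b) (hy : y ∈ Icc a b) (hxy : x ≤ y) :
    ‖m y - m x‖ ^ q ≤ qVar q a y m ^ q - qVar q a x m ^ q := by
  have := norm_sub_rpow_add_qVar_rpow_le hq hx.1 hxy (bddAbove_varSet_of_le hq hy.2 hB)
  linarith

lemma norm_sub_le_qVar (hq : 0 < q) (hB : BddAbove (varSet q a b m)) (hx : x ∈ Icc a b) :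
    ‖m x - m a‖ ≤ qVar q a b m := by
  have hb : b ∈ Icc a b := ⟨hx.1.trans hx.2, le_rfl⟩
  have h₁ := norm_sub_rpow_le_qVar_rpow_sub hq hB (left_mem_Icc.2 hb.1) hx hx.1
  have h₂ := norm_sub_rpow_le_qVar_rpow_sub hq hB hx hb hx.2
  rw [← Real.rpow_le_rpow_iff (norm_nonneg _) qVar_nonneg hq]
  linarith [Real.rpow_nonneg (qVar_nonneg (q := q) (a := a) (x := a) (m := m)) q,
    Real.rpow_nonneg (norm_nonneg (m b - m x)) q]

lemma bddAbove_norm_image (hq : 0 < q) (hB : BddAbove (varSet q a b m)) :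
    BddAbove ((fun x => ‖m x‖) '' Icc a b) := by
  refine ⟨‖m a‖ + qVar q a b m, ?_⟩
  rintro _ ⟨x, hx, rfl⟩
  linarith [norm_sub_le_qVar hq hB hx, norm_sub_norm_le (m x) (m a)]

/-- Identically `0` (as `x / 0 = 0`) when `Var_q(m; [a, b]) = 0`. -/
noncomputable def qVarProfile (q a b : ℝ) (m : ℝ → ℂ) (x : ℝ) : ℝ :=
  qVar q a x m ^ q / qVar q a b m ^ q

lemma qVarProfile_nonneg : 0 ≤ qVarProfile q a b m x :=
  div_nonneg (Real.rpow_nonneg qVar_nonneg q) (Real.rpow_nonneg qVar_nonneg q)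

lemma qVarProfile_le_one (hq : 0 < q) (hB : BddAbove (varSet q a b m)) (hx : x ∈ Icc a b) :
    qVarProfile q a b m x ≤ 1 := by
  refine div_le_one_of_le₀ ?_ (Real.rpow_nonneg qVar_nonneg q)
  have := norm_sub_rpow_le_qVar_rpow_sub hq hB hx ⟨hx.1.trans hx.2, le_rfl⟩ hx.2
  linarith [Real.rpow_nonneg (norm_nonneg (m b - m x)) q]

lemma monotoneOn_qVarProfile (hq : 0 < q) (hB : BddAbove (varSet q a b m)) :
    MonotoneOn (qVarProfile q a b m) (Icc a b) := fun x hx y hy hxy => by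
  refine div_le_div_of_nonneg_right ?_ (Real.rpow_nonneg qVar_nonneg q)
  linarith [norm_sub_rpow_le_qVar_rpow_sub hq hB hx hy hxy,
    Real.rpow_nonneg (norm_nonneg (m y - m x)) q]

lemma norm_sub_rpow_le_qVarProfile_sub (hq : 0 < q) (hB : BddAbove (varSet q a b m))
    (hx : x ∈ Icc a b) (hy : y ∈ Icc a b) (hxy : x ≤ y) :
    ‖m y - m x‖ ^ q ≤ qVar q a b m ^ q * (qVarProfile q a b m y - qVarProfile q a b m x) := by
  have h := norm_sub_rpow_le_qVar_rpow_sub hq hB hx hy hxy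
  rcases (Real.rpow_nonneg (qVar_nonneg (q := q) (a := a) (x := b) (m := m)) q).eq_or_lt
    with hV | hV
  · have := norm_sub_rpow_le_qVar_rpow_sub hq hB hy ⟨hy.1.trans hy.2, le_rfl⟩ hy.2
    rw [← hV] at this ⊢
    linarith [Real.rpow_nonneg (qVar_nonneg (q := q) (a := a) (x := x) (m := m)) q,
      Real.rpow_nonneg (norm_nonneg (m b - m y)) q]
  · rwa [qVarProfile, qVarProfile, ← sub_div, mul_div_cancel₀ _ hV.ne']

end Variation

noncomputable def dyadicLevel (u : ℝ → ℝ) (k : ℕ) (x : ℝ) : ℕ := ⌊2 ^ k * u x⌋₊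

section DyadicLevel

variable {u : ℝ → ℝ} {k : ℕ} {x y : ℝ}

lemma dyadicLevel_succ_div_two : dyadicLevel u (k + 1) x / 2 = dyadicLevel u k x := by
  rw [dyadicLevel, dyadicLevel, ← Nat.floor_div_natCast, pow_succ]
  congr 1
  push_cast
  ring

lemma dyadicLevel_lt (hx : u x ≤ 1) : dyadicLevel u k x < 2 ^ (k + 1) := by
  refine (Nat.floor_le_of_le (n := 2 ^ k) ?_).trans_lt (Nat.pow_lt_pow_succ one_lt_two)
  push_cast
  exact mul_le_of_le_one_right (by positivity) hx

lemma sub_lt_of_dyadicLevel_eq (hx : 0 ≤ u x) (h : dyadicLevel u k x = dyadicLevel u k y) :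
    u y - u x < (2 ^ k)⁻¹ := by
  have h₁ := Nat.lt_floor_add_one (2 ^ k * u y)
  have h₂ := Nat.floor_le (mul_nonneg (pow_nonneg zero_le_two k) hx)
  rw [dyadicLevel, dyadicLevel] at h
  rw [← h] at h₁
  rw [← one_div, lt_div_iff₀ (by positivity), mul_comm, mul_sub]
  linarith

lemma monotoneOn_dyadicLevel {s : Set ℝ} (hu : MonotoneOn u s) :
    MonotoneOn (dyadicLevel u k) s := fun _ hx _ hy hxy =>
  Nat.floor_mono (mul_le_mul_of_nonneg_left (hu hx hy hxy) (by positivity))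

end DyadicLevel

section LevelRep

variable {α β : Type*} [Nonempty α]

/-- Junk when no point of `s` lies on the level set of `ℓ` through `x`. -/
noncomputable def levelRep (s : Set α) (ℓ : α → β) (x : α) : α :=
  Classical.epsilon fun y => y ∈ s ∧ ℓ y = ℓ x

variable {s : Set α} {ℓ : α → β} {x y : α}

lemma levelRep_spec (hx : x ∈ s) : levelRep s ℓ x ∈ s ∧ ℓ (levelRep s ℓ x) = ℓ x :=
  Classical.epsilon_spec (p := fun y => y ∈ s ∧ ℓ y = ℓ x) ⟨x, hx, rfl⟩

lemma levelRep_congr (h : ℓ x = ℓ y) : levelRep s ℓ x = levelRep s ℓ y := by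
  rw [levelRep, levelRep, h]

end LevelRep

noncomputable def dyadicSample (s : Set ℝ) (u : ℝ → ℝ) (m : ℝ → ℂ) (k : ℕ) (x : ℝ) : ℂ :=
  m (levelRep s (dyadicLevel u k) x)

noncomputable def dyadicIncrement (s : Set ℝ) (u : ℝ → ℝ) (m : ℝ → ℂ) : ℕ → ℝ → ℂ
  | 0 => dyadicSample s u m 0
  | k + 1 => dyadicSample s u m (k + 1) - dyadicSample s u m k

section DyadicApproximation

variable {s : Set ℝ} {u : ℝ → ℝ} {m : ℝ → ℂ} {q V : ℝ} {k : ℕ} {x y : ℝ}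

lemma sum_range_dyadicIncrement (K : ℕ) (x : ℝ) :
    ∑ j ∈ range (K + 1), dyadicIncrement s u m j x = dyadicSample s u m K x := by
  induction K with
  | zero => simp [dyadicIncrement]
  | succ K ih => rw [sum_range_succ, ih, dyadicIncrement, Pi.sub_apply, add_sub_cancel]

lemma dyadicIncrement_eq_of_dyadicLevel_eq (h : dyadicLevel u k x = dyadicLevel u k y) :
    dyadicIncrement s u m k x = dyadicIncrement s u m k y := by
  cases k with
  | zero => exact congrArg m (levelRep_congr h)
  | succ k =>
    have h' : dyadicLevel u k x = dyadicLevel u k y := by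
      rw [← dyadicLevel_succ_div_two, h, dyadicLevel_succ_div_two]
    simp only [dyadicIncrement, Pi.sub_apply, dyadicSample, levelRep_congr h, levelRep_congr h']

variable (hq : 0 < q) (hV : 0 ≤ V) (hu : ∀ x ∈ s, 0 ≤ u x)
  (hctrl : ∀ x ∈ s, ∀ y ∈ s, x ≤ y → ‖m y - m x‖ ^ q ≤ V ^ q * (u y - u x))
include hq hV hu hctrl

lemma norm_sub_le_of_dyadicLevel_eq (hx : x ∈ s) (hy : y ∈ s)
    (h : dyadicLevel u k x = dyadicLevel u k y) : ‖m y - m x‖ ≤ V / (2 ^ (1 / q)) ^ k := by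
  wlog hxy : x ≤ y generalizing x y
  · rw [norm_sub_rev]; exact this hy hx h.symm (le_of_not_ge hxy)
  rw [← Real.rpow_le_rpow_iff (norm_nonneg _) (by positivity) hq,
    Real.div_rpow hV (by positivity), Real.rpow_pow_comm zero_le_two, one_div,
    Real.rpow_inv_rpow (by positivity) hq.ne', div_eq_mul_inv]
  exact (hctrl x hx y hy hxy).trans (mul_le_mul_of_nonneg_left
    (sub_lt_of_dyadicLevel_eq (hu x hx) h).le (Real.rpow_nonneg hV q))

lemma norm_sub_dyadicSample_le (hx : x ∈ s) :
    ‖m x - dyadicSample s u m k x‖ ≤ V / (2 ^ (1 / q)) ^ k := by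
  obtain ⟨hr, hrx⟩ := levelRep_spec (ℓ := dyadicLevel u k) hx
  exact norm_sub_le_of_dyadicLevel_eq hq hV hu hctrl hr hx hrx

lemma norm_dyadicIncrement_succ_le (hx : x ∈ s) :
    ‖dyadicIncrement s u m (k + 1) x‖ ≤ 2 * V / (2 ^ (1 / q)) ^ k := by
  have h₁ := norm_sub_dyadicSample_le hq hV hu hctrl (k := k + 1) hx
  have h₂ := norm_sub_dyadicSample_le hq hV hu hctrl (k := k) hx
  have hβ : V / (2 ^ (1 / q)) ^ (k + 1) ≤ V / (2 ^ (1 / q)) ^ k :=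
    div_le_div_of_nonneg_left hV (by positivity)
      (pow_le_pow_right₀ (Real.one_le_rpow one_le_two (by positivity)) k.le_succ)
  calc ‖dyadicIncrement s u m (k + 1) x‖
      = ‖(m x - dyadicSample s u m k x) - (m x - dyadicSample s u m (k + 1) x)‖ := by
        simp only [dyadicIncrement, Pi.sub_apply, sub_sub_sub_cancel_left]
    _ ≤ V / (2 ^ (1 / q)) ^ k + V / (2 ^ (1 / q)) ^ k := (norm_sub_le _ _).trans (by linarith)
    _ = 2 * V / (2 ^ (1 / q)) ^ k := by ring

lemma tendsto_dyadicSample (hx : x ∈ s) :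
    Filter.Tendsto (fun k => dyadicSample s u m k x) Filter.atTop (nhds (m x)) := by
  have hβ : ((2 : ℝ) ^ (1 / q))⁻¹ < 1 :=
    inv_lt_one_of_one_lt₀ (Real.one_lt_rpow one_lt_two (by positivity))
  have h := (tendsto_pow_atTop_nhds_zero_of_lt_one (by positivity) hβ).const_mul V
  rw [mul_zero] at h
  refine tendsto_iff_norm_sub_tendsto_zero.2 (squeeze_zero (fun _ => norm_nonneg _) (fun k => ?_) h)
  rw [norm_sub_rev, inv_pow, ← div_eq_mul_inv]
  exact norm_sub_dyadicSample_le hq hV hu hctrl hx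

end DyadicApproximation

section StepFunctions

variable {p a b : ℝ} {f : ℝ → ℂ} {ℓ : ℝ → ℕ} {N : ℕ}

/-- The level sets of `ℓ` are the intervals of the partition. -/
lemma inRclass_of_monotone_level (hp : 0 < p) (hℓ : MonotoneOn ℓ (Icc a b))
    (hN : ∀ x ∈ Icc a b, ℓ x < N)
    (hf : ∀ x ∈ Icc a b, ∀ y ∈ Icc a b, ℓ x = ℓ y → f x = f y)
    (hbound : ∀ x ∈ Icc a b, ‖f x‖ ^ p ≤ (N : ℝ)⁻¹) : InRclass p a b f := by
  classical
  set J : ℕ → Set ℝ := fun i => {x | x ∈ Icc a b ∧ ℓ x = i}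
  set c : ℕ → ℂ := fun i => if h : (J i).Nonempty then f h.some else 0
  have hc : ∀ i, ‖c i‖ ^ p ≤ (N : ℝ)⁻¹ := fun i => by
    by_cases h : (J i).Nonempty
    · simpa [c, h] using hbound _ h.some_mem.1
    · simp [c, h, Real.zero_rpow hp.ne']
  have hc_zero : ∀ i ∉ range N, ‖c i‖ ^ p = 0 := fun i hi => by
    have h : ¬ (J i).Nonempty := fun ⟨x, hx, hxi⟩ => hi (mem_range.2 (hxi ▸ hN x hx))
    simp [c, h, Real.zero_rpow hp.ne']
  refine ⟨J, c, fun i x hx => hx.1, fun i => ⟨fun x hx y hy z hz => ?_⟩,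
    fun i j hij => Set.disjoint_left.2 fun x hxi hxj => hij (hxi.2.symm.trans hxj.2),
    fun x hx => ⟨ℓ x, hx, rfl⟩, fun i x hx => ?_, fun i hi => by simp [c, hi],
    summable_of_ne_finset_zero hc_zero, ?_⟩
  · have hzI : z ∈ Icc a b := ⟨hx.1.1.trans hz.1, hz.2.trans hy.1.2⟩
    refine ⟨hzI, le_antisymm ?_ ?_⟩
    · exact hy.2 ▸ hℓ hzI hy.1 hz.2
    · exact hx.2 ▸ hℓ hx.1 hzI hz.1
  · have h : (J i).Nonempty := ⟨x, hx⟩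
    simp only [c, h, dite_true]
    exact hf x hx.1 _ h.some_mem.1 (hx.2.trans h.some_mem.2.symm)
  · calc ∑' i, ‖c i‖ ^ p = ∑ i ∈ range N, ‖c i‖ ^ p := tsum_eq_sum hc_zero
      _ ≤ N * (N : ℝ)⁻¹ := by
        simpa using sum_le_card_nsmul (range N) _ _ fun i _ => hc i
      _ ≤ 1 := mul_inv_le_one

lemma exists_inRclass_eq_mul (hp : 0 < p) (hℓ : MonotoneOn ℓ (Icc a b))
    (hN : ∀ x ∈ Icc a b, ℓ x < N)
    (hf : ∀ x ∈ Icc a b, ∀ y ∈ Icc a b, ℓ x = ℓ y → f x = f y)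
    {B : ℝ} (hbound : ∀ x ∈ Icc a b, ‖f x‖ ≤ B) :
    ∃ g, InRclass p a b g ∧ ∀ x ∈ Icc a b, f x = ((B * (N : ℝ) ^ (1 / p) : ℝ) : ℂ) * g x := by
  set C : ℝ := B * (N : ℝ) ^ (1 / p)
  refine ⟨fun x => f x / C, inRclass_of_monotone_level hp hℓ hN
    (fun x hx y hy h => by rw [hf x hx y hy h]) fun x hx => ?_, fun x hx => ?_⟩
  all_goals
    have hN₀ : 0 < (N : ℝ) ^ (1 / p) :=
      Real.rpow_pos_of_pos (by exact_mod_cast (Nat.zero_le _).trans_lt (hN x hx)) _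
    have hfC : ‖f x‖ ≤ C * ((N : ℝ) ^ (1 / p))⁻¹ := by
      rw [mul_inv_cancel_right₀ hN₀.ne']; exact hbound x hx
    have hC : 0 ≤ C := mul_nonneg ((norm_nonneg _).trans (hbound x hx)) hN₀.le
  · have hle : ‖f x / C‖ ≤ ((N : ℝ) ^ (1 / p))⁻¹ := by
      rcases hC.eq_or_lt with hC | hC
      · simpa [← hC] using inv_nonneg.2 hN₀.le
      · rwa [norm_div, Complex.norm_real, Real.norm_of_nonneg hC.le, div_le_iff₀' hC]
    calc ‖f x / C‖ ^ p ≤ (((N : ℝ) ^ (1 / p))⁻¹) ^ p :=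
          Real.rpow_le_rpow (norm_nonneg _) hle hp.le
      _ = (N : ℝ)⁻¹ := by
          rw [Real.inv_rpow hN₀.le, one_div, Real.rpow_inv_rpow (Nat.cast_nonneg N) hp.ne']
  · rcases hC.eq_or_lt with hC | hC
    · simpa [← hC] using hfC
    · rw [mul_div_cancel₀ _ (by exact_mod_cast hC.ne')]

end StepFunctions

/-- Bounds for `‖dyadicIncrement s u m k‖` when `‖m‖ ≤ M` and
`‖m y - m x‖ ^ q ≤ V ^ q * (u y - u x)`. -/
noncomputable def dyadicBound (q M V : ℝ) : ℕ → ℝ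
  | 0 => M
  | k + 1 => 2 * V / (2 ^ (1 / q)) ^ k

lemma dyadicBound_nonneg {q M V : ℝ} (hM : 0 ≤ M) (hV : 0 ≤ V) (k : ℕ) :
    0 ≤ dyadicBound q M V k := by
  cases k <;> simp only [dyadicBound] <;> positivity

/-- `(2 ^ (1 / p)) ^ (k + 1)` is the `ℓ^p` cost of the `2 ^ (k + 1)` steps of the `k`-th increment;
the series converges because `2 ^ (1 / p) < 2 ^ (1 / q)`. -/
lemma hasSum_dyadicBound_mul {p q : ℝ} (hq : 0 < q) (hqp : q < p) (M V : ℝ) :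
    HasSum (fun k => dyadicBound q M V k * (2 ^ (1 / p)) ^ (k + 1))
      (2 ^ (1 / p) * M + 2 * (2 ^ (1 / p)) ^ 2 / (1 - 2 ^ (1 / p) / 2 ^ (1 / q)) * V) := by
  set α : ℝ := 2 ^ (1 / p)
  set β : ℝ := 2 ^ (1 / q)
  have hβ : 0 < β := by positivity
  have hαβ : α < β :=
    Real.rpow_lt_rpow_of_exponent_lt one_lt_two (one_div_lt_one_div_of_lt hq hqp)
  have hsucc : ∀ k, dyadicBound q M V (k + 1) * α ^ (k + 1 + 1) = 2 * α ^ 2 * V * (α / β) ^ k :=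
    fun k => by
      simp only [dyadicBound, div_pow]
      field_simp
      ring
  have hhead : α * M + 2 * α ^ 2 / (1 - α / β) * V
      - ∑ i ∈ range 1, dyadicBound q M V i * α ^ (i + 1) = 2 * α ^ 2 * V * (1 - α / β)⁻¹ := by
    simp only [Finset.range_one, sum_singleton, dyadicBound]
    ring
  rw [← hasSum_nat_add_iff' 1, hhead]
  simp only [hsucc]
  exact (hasSum_geometric_of_lt_one (by positivity) ((div_lt_one hβ).2 hαβ)).mul_left _

lemma exists_inRclass_decomposition {p q a b M V : ℝ} {m : ℝ → ℂ} {u : ℝ → ℝ}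
    (hq : 0 < q) (hqp : q < p) (hab : a ≤ b) (hV : 0 ≤ V)
    (hmono : MonotoneOn u (Icc a b)) (hu0 : ∀ x ∈ Icc a b, 0 ≤ u x)
    (hu1 : ∀ x ∈ Icc a b, u x ≤ 1)
    (hctrl : ∀ x ∈ Icc a b, ∀ y ∈ Icc a b, x ≤ y → ‖m y - m x‖ ^ q ≤ V ^ q * (u y - u x))
    (hM : ∀ x ∈ Icc a b, ‖m x‖ ≤ M) :
    ∃ (lam : ℕ → ℂ) (g : ℕ → ℝ → ℂ), (∀ j, InRclass p a b (g j)) ∧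
      HasSum (fun j => ‖lam j‖)
        (2 ^ (1 / p) * M + 2 * (2 ^ (1 / p)) ^ 2 / (1 - 2 ^ (1 / p) / 2 ^ (1 / q)) * V) ∧
      ∀ x ∈ Icc a b, HasSum (fun j => lam j * g j x) (m x) := by
  set d := dyadicIncrement (Icc a b) u m
  set c : ℕ → ℝ := fun k => dyadicBound q M V k * (2 ^ (1 / p)) ^ (k + 1)
  have hc := hasSum_dyadicBound_mul hq hqp M V
  have hp : 0 < p := hq.trans hqp
  have hB : ∀ k, 0 ≤ dyadicBound q M V k :=
    dyadicBound_nonneg ((norm_nonneg _).trans (hM a (left_mem_Icc.2 hab))) hV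
  have hd : ∀ k, ∀ x ∈ Icc a b, ‖d k x‖ ≤ dyadicBound q M V k
    | 0, x, hx => hM _ (levelRep_spec hx).1
    | k + 1, x, hx => norm_dyadicIncrement_succ_le hq hV hu0 hctrl hx
  have hpiece : ∀ k, ∃ g, InRclass p a b g ∧ ∀ x ∈ Icc a b, d k x = (c k : ℂ) * g x := by
    intro k
    obtain ⟨g, hg, hdg⟩ := exists_inRclass_eq_mul (N := 2 ^ (k + 1)) hp
      (monotoneOn_dyadicLevel hmono) (fun x hx => dyadicLevel_lt (hu1 x hx))
      (fun x _ y _ h => dyadicIncrement_eq_of_dyadicLevel_eq h) (hd k)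
    refine ⟨g, hg, fun x hx => (hdg x hx).trans ?_⟩
    rw [Nat.cast_pow, Nat.cast_two, ← Real.rpow_pow_comm zero_le_two]
  choose g hg hdg using hpiece
  refine ⟨fun k => c k, g, hg, ?_, fun x hx => ?_⟩
  · refine hc.congr_fun fun k => ?_
    rw [Complex.norm_real, Real.norm_of_nonneg (mul_nonneg (hB k) (by positivity))]
  · have hsum : Summable fun k => d k x :=
      Summable.of_norm_bounded hc.summable fun k => (hd k x hx).trans
        (le_mul_of_one_le_right (hB k) (one_le_pow₀ (Real.one_le_rpow one_le_two (by positivity))))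
    have hlim : Filter.Tendsto (fun n => ∑ k ∈ range n, d k x) Filter.atTop (nhds (m x)) :=
      (Filter.tendsto_add_atTop_iff_nat 1).1 <| by
        simpa only [d, sum_range_dyadicIncrement] using tendsto_dyadicSample hq hV hu0 hctrl hx
    exact (hsum.hasSum_iff_tendsto_nat.2 hlim).congr_fun fun k => (hdg k x hx).symm

theorem Vq_subset_Rp (p q : ℝ) (hq : 1 ≤ q) (hqp : q < p) :
    ∃ C > 0, ∀ a b : ℝ, a < b → ∀ m : ℝ → ℂ, BddAbove (varSet q a b m) →
      ∃ (lam : ℕ → ℂ) (g : ℕ → ℝ → ℂ),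
        (∀ j, InRclass p a b (g j)) ∧
        Summable (fun j => ‖lam j‖) ∧
        (∑' j, ‖lam j‖) ≤ C * (sSup ((fun x => ‖m x‖) '' Set.Icc a b) + qVar q a b m) ∧
        (∀ x ∈ Set.Icc a b, m x = ∑' j, lam j * g j x) := by
  have hq₀ : 0 < q := zero_lt_one.trans_le hq
  set α : ℝ := 2 ^ (1 / p)
  set K : ℝ := 2 * α ^ 2 / (1 - α / 2 ^ (1 / q))
  have hK : 0 < K := by
    have : α < 2 ^ (1 / q) :=
      Real.rpow_lt_rpow_of_exponent_lt one_lt_two (one_div_lt_one_div_of_lt hq₀ hqp)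
    have : 0 < 1 - α / 2 ^ (1 / q) := sub_pos.2 ((div_lt_one (by positivity)).2 this)
    positivity
  refine ⟨α + K, by positivity, fun a b hab m hB => ?_⟩
  set M := sSup ((fun x => ‖m x‖) '' Set.Icc a b)
  set V := qVar q a b m
  have hM : 0 ≤ M := Real.sSup_nonneg fun _ ⟨_, _, hx⟩ => hx ▸ norm_nonneg _
  obtain ⟨lam, g, hg, hlam, hm⟩ := exists_inRclass_decomposition hq₀ hqp hab.le qVar_nonneg
    (monotoneOn_qVarProfile hq₀ hB) (fun _ _ => qVarProfile_nonneg)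
    (fun _ hx => qVarProfile_le_one hq₀ hB hx)
    (fun _ hx _ hy hxy => norm_sub_rpow_le_qVarProfile_sub hq₀ hB hx hy hxy)
    (fun x hx => le_csSup (bddAbove_norm_image hq₀ hB) (Set.mem_image_of_mem _ hx))
  refine ⟨lam, g, hg, hlam.summable, ?_, fun x hx => (hm x hx).tsum_eq.symm⟩
  rw [hlam.tsum_eq]
  have : 0 ≤ α := by positivity
  nlinarith [qVar_nonneg (q := q) (a := a) (x := b) (m := m)]
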